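/- arXiv:1812.11115 — 7 statements merged into one kernel-verified Lean document; each statement's English description precedes it below -/
import Mathlib

section
/- For every real number \alpha with -1 \le \alpha < 0, each of the seven quantities \Theta_{1,2} = 3^\alpha - (4/3)\cdot 5^\alpha + (1/3)\cdot 8^\alpha, \Theta_{1,3} = 4^\alpha - (10/9)\cdot 5^\alpha + (1/9)\cdot 8^\alpha, \Theta_{2,2} = 4^\alpha - (2/3)\cdot 5^\alpha - (1/3)\cdot 8^\alpha, \Theta_{2,3} = (5/9)(5^\alpha - 8^\alpha), \Theta_{2,4} = 6^\alpha - (1/3)\cdot 5^\alpha - (2/3)\cdot 8^\alpha, \Theta_{3,3} = 6^\alpha - (2/9)\cdot 5^\alpha - (7/9)\cdot 8^\alpha, and \Theta_{3,4} = 7^\alpha - (1/9)\cdot 5^\alpha - (8/9)\cdot 8^\alpha is strictly positive. -/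
/-!
For `α < 0`, `t ↦ t ^ α` is convex on `(0, ∞)`, so `a x ^ α + b y ^ α ≥ (a x + b y) ^ α`; for
`-1 ≤ α < 0` it is a concave function of `1 / t`, since `t ^ α = (1 / t) ^ (-α)` with
`0 < -α ≤ 1`, so `a x ^ α + b y ^ α ≤ (a / x + b / y) ^ (-α)`. Each `Θ` is `z ^ α` minus such a
weighted mean (or the reverse), and since `t ↦ t ^ α` is decreasing its sign comes down to
comparing `z` with a weighted arithmetic or harmonic mean of two of the bases.
-/

open Real Set

theorem convexOn_rpow_of_nonpos {p : ℝ} (hp : p ≤ 0) : ConvexOn ℝ (Ioi 0) fun x : ℝ ↦ x ^ p := by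
  refine ⟨convex_Ioi 0, fun x hx y hy a b ha hb hab => ?_⟩
  simp only [smul_eq_mul]
  have hx : 0 < x := hx
  have hy : 0 < y := hy
  -- weighted AM-GM twice: once on `x, y`, once on `x ^ p, y ^ p`
  calc (a * x + b * y) ^ p
      ≤ (x ^ a * y ^ b) ^ p :=
        rpow_le_rpow_of_nonpos (by positivity)
          (geom_mean_le_arith_mean2_weighted ha hb hx.le hy.le hab) hp
    _ = (x ^ p) ^ a * (y ^ p) ^ b := by
        rw [mul_rpow (by positivity) (by positivity), ← rpow_mul hx.le, ← rpow_mul hx.le,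
          ← rpow_mul hy.le, ← rpow_mul hy.le, mul_comm a, mul_comm b]
    _ ≤ a * x ^ p + b * y ^ p :=
        geom_mean_le_arith_mean2_weighted ha hb (by positivity) (by positivity) hab

theorem rpow_lt_mul_rpow_add_mul_rpow {p a b x y z : ℝ} (hp : p < 0) (hx : 0 < x) (hy : 0 < y)
    (ha : 0 ≤ a) (hb : 0 ≤ b) (hab : a + b = 1) (h : a * x + b * y < z) :
    z ^ p < a * x ^ p + b * y ^ p := by
  have hmean : 0 < a * x + b * y := by
    rcases ha.lt_or_eq with ha | rfl
    · positivity
    · rw [zero_add] at hab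
      simp [hab, hy]
  calc z ^ p < (a * x + b * y) ^ p := rpow_lt_rpow_of_neg hmean h hp
    _ ≤ a * x ^ p + b * y ^ p := (convexOn_rpow_of_nonpos hp.le).2 hx hy ha hb hab

theorem mul_rpow_add_mul_rpow_le_inv {p a b x y : ℝ} (hp₁ : -1 ≤ p) (hp₀ : p ≤ 0) (hx : 0 < x)
    (hy : 0 < y) (ha : 0 ≤ a) (hb : 0 ≤ b) (hab : a + b = 1) :
    a * x ^ p + b * y ^ p ≤ (a * x⁻¹ + b * y⁻¹) ^ (-p) := by
  have hinv : ∀ t : ℝ, 0 < t → t ^ p = t⁻¹ ^ (-p) := fun t ht => by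
    rw [inv_rpow ht.le, rpow_neg ht.le, inv_inv]
  rw [hinv x hx, hinv y hy]
  simpa only [smul_eq_mul] using (concaveOn_rpow (neg_nonneg.2 hp₀) (by linarith)).2
    (mem_Ici.2 (inv_pos.2 hx).le) (mem_Ici.2 (inv_pos.2 hy).le) ha hb hab

theorem mul_rpow_add_mul_rpow_lt_rpow {p a b x y z : ℝ} (hp₁ : -1 ≤ p) (hp₀ : p < 0)
    (hx : 0 < x) (hy : 0 < y) (hz : 0 < z) (ha : 0 ≤ a) (hb : 0 ≤ b) (hab : a + b = 1)
    (h : a * x⁻¹ + b * y⁻¹ < z⁻¹) :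
    a * x ^ p + b * y ^ p < z ^ p := by
  calc a * x ^ p + b * y ^ p ≤ (a * x⁻¹ + b * y⁻¹) ^ (-p) :=
        mul_rpow_add_mul_rpow_le_inv hp₁ hp₀.le hx hy ha hb hab
    _ < z⁻¹ ^ (-p) := rpow_lt_rpow (by positivity) h (neg_pos.2 hp₀)
    _ = z ^ p := by rw [inv_rpow hz.le, rpow_neg hz.le, inv_inv]

theorem stmt_5 (α : ℝ) (h1 : -1 ≤ α) (h2 : α < 0) :
    0 < (3:ℝ) ^ α - (4/3) * (5:ℝ) ^ α + (1/3) * (8:ℝ) ^ α ∧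
    0 < (4:ℝ) ^ α - (10/9) * (5:ℝ) ^ α + (1/9) * (8:ℝ) ^ α ∧
    0 < (4:ℝ) ^ α - (2/3) * (5:ℝ) ^ α - (1/3) * (8:ℝ) ^ α ∧
    0 < (5/9) * ((5:ℝ) ^ α - (8:ℝ) ^ α) ∧
    0 < (6:ℝ) ^ α - (1/3) * (5:ℝ) ^ α - (2/3) * (8:ℝ) ^ α ∧
    0 < (6:ℝ) ^ α - (2/9) * (5:ℝ) ^ α - (7/9) * (8:ℝ) ^ α ∧
    0 < (7:ℝ) ^ α - (1/9) * (5:ℝ) ^ α - (8/9) * (8:ℝ) ^ α := by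
  have θ₁₂ := rpow_lt_mul_rpow_add_mul_rpow (a := 3/4) (b := 1/4) (x := 3) (y := 8) (z := 5)
    h2 (by norm_num) (by norm_num) (by norm_num) (by norm_num) (by norm_num) (by norm_num)
  have θ₁₃ := rpow_lt_mul_rpow_add_mul_rpow (a := 9/10) (b := 1/10) (x := 4) (y := 8) (z := 5)
    h2 (by norm_num) (by norm_num) (by norm_num) (by norm_num) (by norm_num) (by norm_num)
  have θ₂₂ := mul_rpow_add_mul_rpow_lt_rpow (a := 2/3) (b := 1/3) (x := 5) (y := 8) (z := 4)
    h1 h2 (by norm_num) (by norm_num) (by norm_num) (by norm_num) (by norm_num) (by norm_num)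
    (by norm_num)
  have θ₂₃ : (8:ℝ) ^ α < (5:ℝ) ^ α := rpow_lt_rpow_of_neg (by norm_num) (by norm_num) h2
  have θ₂₄ := mul_rpow_add_mul_rpow_lt_rpow (a := 1/3) (b := 2/3) (x := 5) (y := 8) (z := 6)
    h1 h2 (by norm_num) (by norm_num) (by norm_num) (by norm_num) (by norm_num) (by norm_num)
    (by norm_num)
  have θ₃₃ := mul_rpow_add_mul_rpow_lt_rpow (a := 2/9) (b := 7/9) (x := 5) (y := 8) (z := 6)
    h1 h2 (by norm_num) (by norm_num) (by norm_num) (by norm_num) (by norm_num) (by norm_num)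
    (by norm_num)
  have θ₃₄ := mul_rpow_add_mul_rpow_lt_rpow (a := 1/9) (b := 8/9) (x := 5) (y := 8) (z := 7)
    h1 h2 (by norm_num) (by norm_num) (by norm_num) (by norm_num) (by norm_num) (by norm_num)
    (by norm_num)
  exact ⟨by linarith, by linarith, by linarith, by linarith, by linarith, by linarith, by linarith⟩
end

section
/- For every real number \alpha with 0 < \alpha \le 2, each of the seven quantities \Theta_{1,2} = 3^\alpha - (4/3)\cdot 5^\alpha + (1/3)\cdot 8^\alpha, \Theta_{1,3} = 4^\alpha - (10/9)\cdot 5^\alpha + (1/9)\cdot 8^\alpha, \Theta_{2,2} = 4^\alpha - (2/3)\cdot 5^\alpha - (1/3)\cdot 8^\alpha, \Theta_{2,3} = (5/9)(5^\alpha - 8^\alpha), \Theta_{2,4} = 6^\alpha - (1/3)\cdot 5^\alpha - (2/3)\cdot 8^\alpha, \Theta_{3,3} = 6^\alpha - (2/9)\cdot 5^\alpha - (7/9)\cdot 8^\alpha, and \Theta_{3,4} = 7^\alpha - (1/9)\cdot 5^\alpha - (8/9)\cdot 8^\alpha is strictly negative. -/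
/-!
Each `Θ` is negative because one power `y ^ α` is compared with a convex combination of
`5 ^ α` and `8 ^ α`. For `Θ₁,₂` and `Θ₁,₃` the power lies below the combination: since
`t ↦ t ^ (α / 2)` is concave for `α ≤ 2`, it suffices to check the inequality at `α = 2`.
For `Θ₂,₂`, `Θ₂,₄`, `Θ₃,₃`, `Θ₃,₄` it lies above: by weighted AM-GM it suffices to compare
`y` with the weighted geometric mean of `5` and `8`, an inequality between integers.
`Θ₂,₃` is monotonicity of `t ↦ t ^ α`.
-/

open Real

lemma weighted_rpow_add_lt_rpow_of_sq {α w x y z : ℝ} (hα : 0 < α) (hα₂ : α ≤ 2)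
    (hx : 0 ≤ x) (hy : 0 ≤ y) (hz : 0 ≤ z) (hw₀ : 0 ≤ w) (hw₁ : w ≤ 1)
    (h : w * x ^ 2 + (1 - w) * z ^ 2 < y ^ 2) :
    w * x ^ α + (1 - w) * z ^ α < y ^ α := by
  have hsq : ∀ t : ℝ, 0 ≤ t → (t ^ 2) ^ (α / 2) = t ^ α := fun t ht => by
    rw [← rpow_natCast, ← rpow_mul ht]
    norm_num [mul_div_cancel₀]
  have hconc := (concaveOn_rpow (p := α / 2) (by positivity) (by linarith)).2
    (Set.mem_Ici.2 (sq_nonneg x)) (Set.mem_Ici.2 (sq_nonneg z)) hw₀ (sub_nonneg.2 hw₁)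
    (add_sub_cancel w 1)
  simp only [smul_eq_mul, hsq x hx, hsq z hz] at hconc
  calc w * x ^ α + (1 - w) * z ^ α
      ≤ (w * x ^ 2 + (1 - w) * z ^ 2) ^ (α / 2) := hconc
    _ < (y ^ 2) ^ (α / 2) := by
        gcongr
    _ = y ^ α := hsq y hy

lemma rpow_mul_add_lt_of_pow_lt {α p q r : ℝ} {m n : ℕ} (hα : 0 < α)
    (hp : 0 ≤ p) (hq : 0 ≤ q) (hr : 0 ≤ r) (h : r ^ (m + n) < p ^ m * q ^ n) :
    (m + n) * r ^ α < m * p ^ α + n * q ^ α := by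
  have hk : (0 : ℝ) < m + n := by
    have : 0 < m + n := Nat.pos_of_ne_zero fun h0 => by
      obtain ⟨rfl, rfl⟩ := Nat.add_eq_zero_iff.1 h0
      simp at h
    exact_mod_cast this
  set k : ℝ := m + n
  have hpow : ∀ (t : ℝ) (j : ℕ), 0 ≤ t → (t ^ j) ^ (α / k) = (t ^ α) ^ ((j : ℝ) / k) :=
    fun t j ht => by
      rw [← rpow_natCast, ← rpow_mul ht, ← rpow_mul ht]
      ring_nf
  have amgm := geom_mean_le_arith_mean2_weighted (w₁ := m / k) (w₂ := n / k)
    (by positivity) (by positivity) (rpow_nonneg hp α) (rpow_nonneg hq α)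
    (by rw [← add_div, div_self hk.ne'])
  have hgeom : r ^ α < (p ^ α) ^ ((m : ℝ) / k) * (q ^ α) ^ ((n : ℝ) / k) := by
    calc r ^ α = (r ^ (m + n)) ^ (α / k) := by
          rw [hpow r (m + n) hr, Nat.cast_add, div_self hk.ne', rpow_one]
      _ < (p ^ m * q ^ n) ^ (α / k) := by gcongr
      _ = _ := by rw [mul_rpow (by positivity) (by positivity), hpow p m hp, hpow q n hq]
  have := mul_lt_mul_of_pos_left (hgeom.trans_le amgm) hk
  rwa [mul_add, ← mul_assoc, ← mul_assoc, mul_div_cancel₀ _ hk.ne',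
    mul_div_cancel₀ _ hk.ne'] at this

theorem stmt_6 (α : ℝ) (h1 : 0 < α) (h2 : α ≤ 2) :
    (3:ℝ) ^ α - (4/3) * (5:ℝ) ^ α + (1/3) * (8:ℝ) ^ α < 0 ∧
    (4:ℝ) ^ α - (10/9) * (5:ℝ) ^ α + (1/9) * (8:ℝ) ^ α < 0 ∧
    (4:ℝ) ^ α - (2/3) * (5:ℝ) ^ α - (1/3) * (8:ℝ) ^ α < 0 ∧
    (5/9) * ((5:ℝ) ^ α - (8:ℝ) ^ α) < 0 ∧
    (6:ℝ) ^ α - (1/3) * (5:ℝ) ^ α - (2/3) * (8:ℝ) ^ α < 0 ∧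
    (6:ℝ) ^ α - (2/9) * (5:ℝ) ^ α - (7/9) * (8:ℝ) ^ α < 0 ∧
    (7:ℝ) ^ α - (1/9) * (5:ℝ) ^ α - (8/9) * (8:ℝ) ^ α < 0 := by
  have below (w x : ℝ) (hx : 0 ≤ x) (hw₀ : 0 ≤ w) (hw₁ : w ≤ 1)
      (h : w * x ^ 2 + (1 - w) * 8 ^ 2 < (5 : ℝ) ^ 2) :
      w * x ^ α + (1 - w) * (8 : ℝ) ^ α < 5 ^ α :=
    weighted_rpow_add_lt_rpow_of_sq h1 h2 hx (by norm_num) (by norm_num) hw₀ hw₁ h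
  have above (r : ℝ) (m n : ℕ) (hr : 0 ≤ r) (h : r ^ (m + n) < (5 : ℝ) ^ m * 8 ^ n) :
      (m + n) * r ^ α < m * (5 : ℝ) ^ α + n * 8 ^ α :=
    rpow_mul_add_lt_of_pow_lt h1 (by norm_num) (by norm_num) hr h
  have θ₁₂ := below (3 / 4) 3 (by norm_num) (by norm_num) (by norm_num) (by norm_num)
  have θ₁₃ := below (9 / 10) 4 (by norm_num) (by norm_num) (by norm_num) (by norm_num)
  have θ₂₂ := above 4 2 1 (by norm_num) (by norm_num)
  have θ₂₃ : (5 : ℝ) ^ α < 8 ^ α := rpow_lt_rpow (by norm_num) (by norm_num) h1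
  have θ₂₄ := above 6 1 2 (by norm_num) (by norm_num)
  have θ₃₃ := above 6 2 7 (by norm_num) (by norm_num)
  have θ₃₄ := above 7 1 8 (by norm_num) (by norm_num)
  push_cast at θ₂₂ θ₂₄ θ₃₃ θ₃₄
  refine ⟨?_, ?_, ?_, ?_, ?_, ?_, ?_⟩ <;> linarith
end

section
/- For every real number \alpha with -1 \le \alpha < 0, we have \min\{\Theta_{1,3}, \Theta_{2,3}, \Theta_{3,3}\} > \Theta_{3,4} > 0, where \Theta_{1,3} = 4^\alpha - (10/9)\cdot 5^\alpha + (1/9)\cdot 8^\alpha, \Theta_{2,3} = (5/9)(5^\alpha - 8^\alpha), \Theta_{3,3} = 6^\alpha - (2/9)\cdot 5^\alpha - (7/9)\cdot 8^\alpha, and \Theta_{3,4} = 7^\alpha - (1/9)\cdot 5^\alpha - (8/9)\cdot 8^\alpha. -/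
/-!
Clearing denominators, each comparison is a linear inequality between the powers `n ^ α`,
`4 ≤ n ≤ 8`, and each follows from two first-order bounds for `t ↦ t ^ α`: the tangent line lies
below it for `α ≤ 0`, and for `-1 ≤ α ≤ 0` the Bernoulli bound `s ^ (-α) ≤ 1 - α (s - 1)`
bounds it from above. Comparing `x ^ α` and `y ^ α` with these bounds around a common base
point leaves in each case a remainder `(-α) · (positive combination of powers)`, positive since
`t ↦ t ^ α` is decreasing.
-/

open Real

namespace Real

theorem one_add_mul_sub_one_le_rpow_of_nonpos {t α : ℝ} (ht : 0 < t) (hα : α ≤ 0) :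
    1 + α * (t - 1) ≤ t ^ α :=
  calc 1 + α * (t - 1) ≤ α * log t + 1 := by
        nlinarith [log_le_sub_one_of_pos ht]
    _ ≤ exp (α * log t) := add_one_le_exp _
    _ = t ^ α := by rw [rpow_def_of_pos ht, mul_comm]

theorem rpow_mul_one_add_le_rpow_of_nonpos {x y α : ℝ} (hx : 0 < x) (hy : 0 < y) (hα : α ≤ 0) :
    x ^ α * (1 + α * (y / x - 1)) ≤ y ^ α := by
  have hxα : 0 < x ^ α := rpow_pos_of_pos hx α
  calc x ^ α * (1 + α * (y / x - 1)) ≤ x ^ α * (y / x) ^ α :=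
        mul_le_mul_of_nonneg_left (one_add_mul_sub_one_le_rpow_of_nonpos (div_pos hy hx) hα)
          hxα.le
    _ = y ^ α := by rw [div_rpow hy.le hx.le]; field_simp

theorem rpow_le_rpow_mul_one_sub {x y α : ℝ} (hx : 0 < x) (hy : 0 < y) (h1 : -1 ≤ α)
    (hα : α ≤ 0) : y ^ α ≤ x ^ α * (1 - α * (x / y - 1)) := by
  have hxα : 0 < x ^ α := rpow_pos_of_pos hx α
  have hbound : (1 + (x / y - 1)) ^ (-α) ≤ 1 + (-α) * (x / y - 1) :=
    rpow_one_add_le_one_add_mul_self (by linarith [div_pos hx hy]) (by linarith) (by linarith)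
  calc y ^ α = x ^ α * (x / y) ^ (-α) := by
        rw [div_rpow hx.le hy.le, rpow_neg hx.le, rpow_neg hy.le]; field_simp
    _ ≤ x ^ α * (1 - α * (x / y - 1)) := by
        gcongr
        simpa [neg_mul, ← sub_eq_add_neg] using hbound

end Real

section

variable {α : ℝ}

lemma rpow_five_add_rpow_seven_lt (h1 : -1 ≤ α) (h2 : α < 0) :
    (5:ℝ) ^ α + (7:ℝ) ^ α < (4:ℝ) ^ α + (8:ℝ) ^ α := by
  have h4 := rpow_mul_one_add_le_rpow_of_nonpos (x := 5) (y := 4) (by norm_num) (by norm_num) h2.le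
  have h7 := rpow_le_rpow_mul_one_sub (x := 8) (y := 7) (by norm_num) (by norm_num) h1 h2.le
  have h85 : (8:ℝ) ^ α < (5:ℝ) ^ α := rpow_lt_rpow_of_neg (by norm_num) (by norm_num) h2
  have h8 : 0 < (8:ℝ) ^ α := rpow_pos_of_pos (by norm_num) α
  nlinarith [mul_pos (neg_pos.2 h2) (by linarith : 0 < (5:ℝ) ^ α / 5 - (8:ℝ) ^ α / 7)]

lemma rpow_seven_lt (h2 : α < 0) :
    (7:ℝ) ^ α < (2/3) * (5:ℝ) ^ α + (1/3) * (8:ℝ) ^ α := by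
  have h5 := rpow_mul_one_add_le_rpow_of_nonpos (x := 7) (y := 5) (by norm_num) (by norm_num) h2.le
  have h8 := rpow_mul_one_add_le_rpow_of_nonpos (x := 7) (y := 8) (by norm_num) (by norm_num) h2.le
  nlinarith [mul_pos (neg_pos.2 h2) (rpow_pos_of_pos (by norm_num : (0:ℝ) < 7) α)]

lemma rpow_five_add_nine_mul_rpow_seven_lt (h1 : -1 ≤ α) (h2 : α < 0) :
    (5:ℝ) ^ α + 9 * (7:ℝ) ^ α < 9 * (6:ℝ) ^ α + (8:ℝ) ^ α := by
  have h6 := rpow_mul_one_add_le_rpow_of_nonpos (x := 7) (y := 6) (by norm_num) (by norm_num) h2.le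
  have h5 := rpow_le_rpow_mul_one_sub (x := 8) (y := 5) (by norm_num) (by norm_num) h1 h2.le
  have h87 : (8:ℝ) ^ α < (7:ℝ) ^ α := rpow_lt_rpow_of_neg (by norm_num) (by norm_num) h2
  have h8 : 0 < (8:ℝ) ^ α := rpow_pos_of_pos (by norm_num) α
  nlinarith [mul_pos (neg_pos.2 h2) (by linarith : 0 < 9/7 * (7:ℝ) ^ α - 3/5 * (8:ℝ) ^ α)]

lemma rpow_five_add_eight_mul_rpow_eight_lt (h1 : -1 ≤ α) (h2 : α < 0) :
    (5:ℝ) ^ α + 8 * (8:ℝ) ^ α < 9 * (7:ℝ) ^ α := by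
  have h7 := rpow_mul_one_add_le_rpow_of_nonpos (x := 8) (y := 7) (by norm_num) (by norm_num) h2.le
  have h5 := rpow_le_rpow_mul_one_sub (x := 8) (y := 5) (by norm_num) (by norm_num) h1 h2.le
  nlinarith [mul_pos (neg_pos.2 h2) (rpow_pos_of_pos (by norm_num : (0:ℝ) < 8) α)]

end

theorem stmt_7 (α : ℝ) (h1 : -1 ≤ α) (h2 : α < 0) :
    min ((4:ℝ) ^ α - (10/9) * (5:ℝ) ^ α + (1/9) * (8:ℝ) ^ α)
      (min ((5/9) * ((5:ℝ) ^ α - (8:ℝ) ^ α))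
        ((6:ℝ) ^ α - (2/9) * (5:ℝ) ^ α - (7/9) * (8:ℝ) ^ α))
      > (7:ℝ) ^ α - (1/9) * (5:ℝ) ^ α - (8/9) * (8:ℝ) ^ α ∧
    (7:ℝ) ^ α - (1/9) * (5:ℝ) ^ α - (8/9) * (8:ℝ) ^ α > 0 := by
  have hA := rpow_five_add_rpow_seven_lt h1 h2
  have hB := rpow_seven_lt h2
  have hC := rpow_five_add_nine_mul_rpow_seven_lt h1 h2
  have hD := rpow_five_add_eight_mul_rpow_eight_lt h1 h2
  refine ⟨?_, by linarith⟩
  simp only [gt_iff_lt, lt_min_iff]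
  exact ⟨by linarith, by linarith, by linarith⟩
end

section
/- For every real number \alpha with 1 < \alpha \le 2, we have \max\{\Theta_{2,3}, \Theta_{3,3}, \Theta_{3,4}\} < \Theta_{1,3} < 0, where \Theta_{1,3} = 4^\alpha - (10/9)\cdot 5^\alpha + (1/9)\cdot 8^\alpha, \Theta_{2,3} = (5/9)(5^\alpha - 8^\alpha), \Theta_{3,3} = 6^\alpha - (2/9)\cdot 5^\alpha - (7/9)\cdot 8^\alpha, and \Theta_{3,4} = 7^\alpha - (1/9)\cdot 5^\alpha - (8/9)\cdot 8^\alpha. -/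
/-! Each of the three bounds `Θ < Θ₁,₃` is Jensen's inequality for the strictly convex map
`x ↦ x ^ α` at the points `4` and `8` (e.g. `5 = ¾·4 + ¼·8` and `7 = ¼·4 + ¾·8` give
`5^α + 7^α < 4^α + 8^α`), possibly followed by monotonicity. The bound `Θ₁,₃ < 0` goes the
other way: writing `x ^ α = (x²) ^ (α/2)`, it is Jensen for the concave map `y ↦ y ^ (α/2)`
at `16` and `64`, and this is where `α ≤ 2` enters. -/

open Real

lemma rpow_convex_combination_lt {p : ℝ} (hp : 1 < p) {x y a b : ℝ} (hx : 0 ≤ x) (hy : 0 ≤ y)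
    (hxy : x ≠ y) (ha : 0 < a) (hb : 0 < b) (hab : a + b = 1) :
    (a * x + b * y) ^ p < a * x ^ p + b * y ^ p :=
  (strictConvexOn_rpow hp).2 hx hy hxy ha hb hab

lemma rpow_convex_combination_ge {p : ℝ} (hp₀ : 0 ≤ p) (hp₁ : p ≤ 1) {x y a b : ℝ} (hx : 0 ≤ x)
    (hy : 0 ≤ y) (ha : 0 ≤ a) (hb : 0 ≤ b) (hab : a + b = 1) :
    a * x ^ p + b * y ^ p ≤ (a * x + b * y) ^ p :=
  (Real.concaveOn_rpow hp₀ hp₁).2 hx hy ha hb hab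

lemma rpow_five_add_rpow_seven_lt_s8 {p : ℝ} (hp : 1 < p) :
    (5 : ℝ) ^ p + 7 ^ p < 4 ^ p + 8 ^ p := by
  have h5 := rpow_convex_combination_lt hp (x := 4) (y := 8) (a := 3/4) (b := 1/4)
    (by norm_num) (by norm_num) (by norm_num) (by norm_num) (by norm_num) (by norm_num)
  have h7 := rpow_convex_combination_lt hp (x := 4) (y := 8) (a := 1/4) (b := 3/4)
    (by norm_num) (by norm_num) (by norm_num) (by norm_num) (by norm_num) (by norm_num)
  norm_num at h5 h7
  linarith

lemma five_mul_rpow_five_lt {p : ℝ} (hp : 1 < p) :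
    5 * (5 : ℝ) ^ p < 3 * 4 ^ p + 2 * 8 ^ p := by
  have h := rpow_convex_combination_lt hp (x := 4) (y := 8) (a := 3/5) (b := 2/5)
    (by norm_num) (by norm_num) (by norm_num) (by norm_num) (by norm_num) (by norm_num)
  have hmono : (5 : ℝ) ^ p < (28/5) ^ p := rpow_lt_rpow (by norm_num) (by norm_num) (by linarith)
  norm_num at h
  linarith

lemma nine_mul_rpow_six_add_eight_mul_rpow_five_lt {p : ℝ} (hp : 1 < p) :
    9 * (6 : ℝ) ^ p + 8 * 5 ^ p < 9 * 4 ^ p + 8 * 8 ^ p := by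
  have h6 := rpow_convex_combination_lt hp (x := 4) (y := 8) (a := 1/2) (b := 1/2)
    (by norm_num) (by norm_num) (by norm_num) (by norm_num) (by norm_num) (by norm_num)
  have h5 := rpow_convex_combination_lt hp (x := 4) (y := 8) (a := 3/4) (b := 1/4)
    (by norm_num) (by norm_num) (by norm_num) (by norm_num) (by norm_num) (by norm_num)
  have hmono : (4 : ℝ) ^ p < 8 ^ p := rpow_lt_rpow (by norm_num) (by norm_num) (by linarith)
  norm_num at h6 h5
  linarith

lemma rpow_eq_sq_rpow_half {x : ℝ} (hx : 0 ≤ x) (p : ℝ) : x ^ p = (x ^ 2) ^ (p / 2) := by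
  rw [← rpow_natCast_mul hx]; push_cast; ring_nf

lemma nine_mul_rpow_four_add_rpow_eight_lt {p : ℝ} (hp₀ : 0 < p) (hp₂ : p ≤ 2) :
    9 * (4 : ℝ) ^ p + 8 ^ p < 10 * 5 ^ p := by
  have h := rpow_convex_combination_ge (p := p / 2) (by positivity) (by linarith)
    (x := 16) (y := 64) (a := 9/10) (b := 1/10)
    (by norm_num) (by norm_num) (by norm_num) (by norm_num) (by norm_num)
  have hmono : (104/5 : ℝ) ^ (p / 2) < 25 ^ (p / 2) :=
    rpow_lt_rpow (by norm_num) (by norm_num) (by positivity)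
  rw [rpow_eq_sq_rpow_half (x := 4) (by norm_num), rpow_eq_sq_rpow_half (x := 5) (by norm_num),
    rpow_eq_sq_rpow_half (x := 8) (by norm_num)]
  norm_num at h ⊢
  linarith

theorem stmt_8 (α : ℝ) (h1 : 1 < α) (h2 : α ≤ 2) :
    max ((5/9) * ((5:ℝ) ^ α - (8:ℝ) ^ α))
      (max ((6:ℝ) ^ α - (2/9) * (5:ℝ) ^ α - (7/9) * (8:ℝ) ^ α)
        ((7:ℝ) ^ α - (1/9) * (5:ℝ) ^ α - (8/9) * (8:ℝ) ^ α))
      < (4:ℝ) ^ α - (10/9) * (5:ℝ) ^ α + (1/9) * (8:ℝ) ^ α ∧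
    (4:ℝ) ^ α - (10/9) * (5:ℝ) ^ α + (1/9) * (8:ℝ) ^ α < 0 := by
  have h23 := five_mul_rpow_five_lt h1
  have h33 := nine_mul_rpow_six_add_eight_mul_rpow_five_lt h1
  have h34 := rpow_five_add_rpow_seven_lt_s8 h1
  have h13 := nine_mul_rpow_four_add_rpow_eight_lt (by linarith) h2
  exact ⟨max_lt (by linarith) (max_lt (by linarith) (by linarith)), by linarith⟩
end

section
/- For every real number \alpha with -1 \le \alpha < 0, we have \min\{\Theta_{1,2}, \Theta_{2,2}, \Theta_{2,3}\} > \Theta_{2,4} > 0, where \Theta_{1,2} = 3^\alpha - (4/3)\cdot 5^\alpha + (1/3)\cdot 8^\alpha, \Theta_{2,2} = 4^\alpha - (2/3)\cdot 5^\alpha - (1/3)\cdot 8^\alpha, \Theta_{2,3} = (5/9)(5^\alpha - 8^\alpha), and \Theta_{2,4} = 6^\alpha - (1/3)\cdot 5^\alpha - (2/3)\cdot 8^\alpha. -/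
/-!
Throughout, `x ↦ x ^ α` is strictly convex and strictly decreasing on `(0, ∞)`. Each of the three
differences `Θ_{1,2} - Θ_{2,4}`, `Θ_{2,2} - Θ_{2,4}`, `Θ_{2,3} - Θ_{2,4}` is then positive by
two-point Jensen inequalities such as `5 ^ α < (3/5) 3 ^ α + (2/5) 8 ^ α`. Positivity of `Θ_{2,4}`
is where `α ≥ -1` enters: the weighted power mean of order `α` of `5` and `8` dominates their
harmonic mean `20/3`, which exceeds `6`.
-/

open Set Real

namespace Real

lemma strictConvexOn_rpow_of_neg {p : ℝ} (hp : p < 0) :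
    StrictConvexOn ℝ (Ioi 0) fun x : ℝ ↦ x ^ p := by
  refine strictConvexOn_of_deriv2_pos' (convex_Ioi 0)
    (continuousOn_id.rpow_const fun x hx ↦ Or.inl (ne_of_gt hx)) fun x hx ↦ ?_
  have hpoch : (descPochhammer ℝ 2).eval p = p * (p - 1) := by
    simp [descPochhammer_succ_right]
  rw [iter_deriv_rpow_const, hpoch]
  exact mul_pos (mul_pos_of_neg_of_neg hp (by linarith)) (rpow_pos_of_pos hx _)

lemma rpow_lt_weighted_rpow_of_le {α x y z a b : ℝ} (hα : α < 0) (hx : 0 < x) (hy : 0 < y)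
    (hxy : x ≠ y) (ha : 0 < a) (hb : 0 < b) (hab : a + b = 1) (hz : a * x + b * y ≤ z) :
    z ^ α < a * x ^ α + b * y ^ α :=
  calc z ^ α ≤ (a * x + b * y) ^ α := rpow_le_rpow_of_nonpos (by positivity) hz hα.le
    _ < a * x ^ α + b * y ^ α := (strictConvexOn_rpow_of_neg hα).2 hx hy hxy ha hb hab

lemma weighted_rpow_lt_rpow_of_lt_harmonic {α x y z a b : ℝ} (hα₁ : -1 ≤ α) (hα : α < 0)
    (hx : 0 < x) (hy : 0 < y) (hz : 0 < z) (ha : 0 ≤ a) (hb : 0 ≤ b) (hab : a + b = 1)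
    (hzh : z * (a / x + b / y) < 1) :
    a * x ^ α + b * y ^ α < z ^ α := by
  have hratio : ∀ {w : ℝ}, 0 < w → w ^ α = z ^ α * (z / w) ^ (-α) := fun hw ↦ by
    rw [div_rpow hz.le hw.le, rpow_neg hz.le, rpow_neg hw.le]
    field_simp
  have hconcave : a * (z / x) ^ (-α) + b * (z / y) ^ (-α) < 1 :=
    calc a * (z / x) ^ (-α) + b * (z / y) ^ (-α) ≤ (a * (z / x) + b * (z / y)) ^ (-α) :=
          (concaveOn_rpow (by linarith) (by linarith)).2 (mem_Ici.2 (by positivity))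
            (mem_Ici.2 (by positivity)) ha hb hab
      _ < 1 := rpow_lt_one (by positivity)
          (by linarith [show a * (z / x) + b * (z / y) = z * (a / x + b / y) by ring])
          (by linarith)
  rw [hratio hx, hratio hy]
  nlinarith [rpow_pos_of_pos hz α]

end Real

theorem stmt_9 (α : ℝ) (h1 : -1 ≤ α) (h2 : α < 0) :
    min ((3:ℝ) ^ α - (4/3) * (5:ℝ) ^ α + (1/3) * (8:ℝ) ^ α)
      (min ((4:ℝ) ^ α - (2/3) * (5:ℝ) ^ α - (1/3) * (8:ℝ) ^ α)
        ((5/9) * ((5:ℝ) ^ α - (8:ℝ) ^ α)))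
      > (6:ℝ) ^ α - (1/3) * (5:ℝ) ^ α - (2/3) * (8:ℝ) ^ α ∧
    (6:ℝ) ^ α - (1/3) * (5:ℝ) ^ α - (2/3) * (8:ℝ) ^ α > 0 := by
  have jensen_5_8 : (6:ℝ) ^ α < (8/9) * (5:ℝ) ^ α + (1/9) * (8:ℝ) ^ α :=
    rpow_lt_weighted_rpow_of_le h2 (by norm_num) (by norm_num) (by norm_num) (by norm_num)
      (by norm_num) (by norm_num) (by norm_num)
  have jensen_4_8 : (6:ℝ) ^ α < (1/2) * (4:ℝ) ^ α + (1/2) * (8:ℝ) ^ α :=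
    rpow_lt_weighted_rpow_of_le h2 (by norm_num) (by norm_num) (by norm_num) (by norm_num)
      (by norm_num) (by norm_num) (by norm_num)
  have jensen_3_8 : (5:ℝ) ^ α < (3/5) * (3:ℝ) ^ α + (2/5) * (8:ℝ) ^ α :=
    rpow_lt_weighted_rpow_of_le h2 (by norm_num) (by norm_num) (by norm_num) (by norm_num)
      (by norm_num) (by norm_num) (by norm_num)
  have jensen_3_8' : (6:ℝ) ^ α < (2/5) * (3:ℝ) ^ α + (3/5) * (8:ℝ) ^ α :=
    rpow_lt_weighted_rpow_of_le h2 (by norm_num) (by norm_num) (by norm_num) (by norm_num)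
      (by norm_num) (by norm_num) (by norm_num)
  have anti_4_5 : (5:ℝ) ^ α < (4:ℝ) ^ α := rpow_lt_rpow_of_neg (by norm_num) (by norm_num) h2
  have anti_5_8 : (8:ℝ) ^ α < (5:ℝ) ^ α := rpow_lt_rpow_of_neg (by norm_num) (by norm_num) h2
  have harmonic : (1/3) * (5:ℝ) ^ α + (2/3) * (8:ℝ) ^ α < (6:ℝ) ^ α :=
    weighted_rpow_lt_rpow_of_lt_harmonic h1 h2 (by norm_num) (by norm_num) (by norm_num)
      (by norm_num) (by norm_num) (by norm_num) (by norm_num)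
  exact ⟨lt_min (by linarith) (lt_min (by linarith) (by linarith)), by linarith⟩
end

section
/- Let G be a molecular graph with n \ge 5 vertices and m edges. Then the first Zagreb index satisfies M_1(G) \le 10m - 4n, with equality if and only if G has no vertex of degree 2 or 3. -/
/-! The proof is pointwise: for `1 ≤ d ≤ 4` we have `d² ≤ 5d - 4`, since
`5d - 4 - d² = (d - 1)(4 - d)`, with equality exactly for `d ∈ {1, 4}`; summing over the
vertices and using the handshake lemma `∑ d_v = 2m` gives `M₁ ≤ 10m - 4n`. -/

open Finset

theorem sq_le_five_mul_sub_four {d : ℤ} (h1 : 1 ≤ d) (h4 : d ≤ 4) : d ^ 2 ≤ 5 * d - 4 := by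
  nlinarith

theorem sq_eq_five_mul_sub_four_iff {d : ℤ} : d ^ 2 = 5 * d - 4 ↔ d = 1 ∨ d = 4 := by
  have hfactor : d ^ 2 - (5 * d - 4) = (d - 1) * (d - 4) := by ring
  rw [← sub_eq_zero, hfactor, mul_eq_zero, sub_eq_zero, sub_eq_zero]

theorem SimpleGraph.sum_five_mul_degree_sub_four {V : Type*} [Fintype V] (G : SimpleGraph V)
    [DecidableRel G.Adj] :
    ∑ v, (5 * (G.degree v : ℤ) - 4) = 10 * #G.edgeFinset - 4 * Fintype.card V := by
  have handshake : ∑ v, (G.degree v : ℤ) = 2 * #G.edgeFinset := by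
    exact_mod_cast G.sum_degrees_eq_twice_card_edges
  rw [sum_sub_distrib, ← mul_sum, handshake, sum_const, card_univ, nsmul_eq_mul]
  ring

theorem stmt_13_general {V : Type*} [Fintype V]
    (G : SimpleGraph V) [DecidableRel G.Adj]
    (hmax : ∀ v, G.degree v ≤ 4) (hmin : ∀ v, 1 ≤ G.degree v)
    (n m : ℕ) (hn : n = Fintype.card V) (hm : m = G.edgeFinset.card)
    (M₁ : ℕ) (hM : M₁ = ∑ v, (G.degree v) ^ 2) :
    (M₁ : ℤ) ≤ 10 * m - 4 * n ∧
    ((M₁ : ℤ) = 10 * m - 4 * n ↔ ∀ v, G.degree v ≠ 2 ∧ G.degree v ≠ 3) := by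
  have hM₁ : (M₁ : ℤ) = ∑ v, (G.degree v : ℤ) ^ 2 := by rw [hM]; push_cast; rfl
  have hbound : ∀ v ∈ univ, (G.degree v : ℤ) ^ 2 ≤ 5 * G.degree v - 4 := fun v _ =>
    sq_le_five_mul_sub_four (by exact_mod_cast hmin v) (by exact_mod_cast hmax v)
  rw [hM₁, hn, hm, ← G.sum_five_mul_degree_sub_four, sum_eq_sum_iff_of_le hbound]
  refine ⟨sum_le_sum hbound, forall_congr' fun v => ?_⟩
  rw [sq_eq_five_mul_sub_four_iff]
  have := hmin v
  have := hmax v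
  simp only [mem_univ, true_implies]
  omega

theorem stmt_13 {V : Type*} [Fintype V] [DecidableEq V]
    (G : SimpleGraph V) [DecidableRel G.Adj]
    (hmax : ∀ v, G.degree v ≤ 4) (hmin : ∀ v, 1 ≤ G.degree v)
    (n m : ℕ) (hn : n = Fintype.card V) (hm : m = G.edgeFinset.card)
    (hn5 : 5 ≤ n)
    (M₁ : ℕ) (hM : M₁ = ∑ v, (G.degree v) ^ 2) :
    (M₁ : ℤ) ≤ 10 * m - 4 * n ∧
    ((M₁ : ℤ) = 10 * m - 4 * n ↔ ∀ v, G.degree v ≠ 2 ∧ G.degree v ≠ 3) :=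
  stmt_13_general G hmax hmin n m hn hm M₁ hM
end

section
/- For every real number k with 0 < k \le 1, the inequalities \Phi_{1,2} > \Phi_{2,2} > \Phi_{2,3} > \Phi_{2,4} > 0 and \Phi_{1,3} > \Phi_{2,3} > \Phi_{3,3} > \Phi_{3,4} > 0 hold, where \Phi_{1,2} = (2\sqrt2/3)^k - (4/3)(4/5)^k + 1/3, \Phi_{1,3} = (\sqrt3/2)^k - (10/9)(4/5)^k + 1/9, \Phi_{2,2} = (2/3)(1-(4/5)^k), \Phi_{2,3} = (2\sqrt6/5)^k - (4/9)(4/5)^k - 5/9, \Phi_{2,4} = (2\sqrt2/3)^k - (1/3)(4/5)^k - 2/3, \Phi_{3,3} = (2/9)(1-(4/5)^k), and \Phi_{3,4} = (4\sqrt3/7)^k - (1/9)(4/5)^k - 8/9. -/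
/-!
Each of the eight inequalities is affine in the powers `(4/5)^k`, `(√(8/9))^k`, `(√(24/25))^k`,
`(√(3/4))^k` and `(√(48/49))^k`. Since `k ↦ p^k` is convex, each power lies above its tangent
`1 + k log p` at `k = 0` and, for `0 ≤ k ≤ 1`, below its chord `1 + k (p - 1)`. Replacing the powers
by these affine bounds in `k` (with rational bounds on the logarithms and square roots) turns every
inequality into a linear one in `k`, which holds on `(0, 1]`. The bound `log r ≥ 1 - 1/r` suffices
except for `r = 3/4`, where the margin is too small and the bounds on `log 2` and `log 3` are used.
-/

open Real

lemma one_add_mul_log_lt_rpow {p k : ℝ} (hp : 0 < p) (hp1 : p ≠ 1) (hk : k ≠ 0) :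
    1 + k * log p < p ^ k := by
  have hlog : log p ≠ 0 := fun h => hp1 (eq_one_of_pos_of_log_eq_zero hp h)
  rw [rpow_def_of_pos hp, mul_comm k]
  linarith [add_one_lt_exp (mul_ne_zero hlog hk)]

lemma rpow_le_one_add_mul_of_le {p M k : ℝ} (hp : 0 ≤ p) (hpM : p ≤ M) (hk0 : 0 ≤ k)
    (hk1 : k ≤ 1) : p ^ k ≤ 1 + k * (M - 1) := by
  have h := rpow_one_add_le_one_add_mul_self (s := p - 1) (by linarith) hk0 hk1
  rw [add_sub_cancel] at h
  nlinarith

lemma one_add_mul_div_two_lt_sqrt_rpow {r m k : ℝ} (hr : 0 < r) (hr1 : r ≠ 1) (hk : 0 < k)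
    (hm : m ≤ log r) : 1 + k * m / 2 < √r ^ k :=
  calc 1 + k * m / 2 ≤ 1 + k * log √r := by
        rw [log_sqrt hr.le]; nlinarith
    _ < √r ^ k := one_add_mul_log_lt_rpow (sqrt_pos.2 hr) (mt sqrt_eq_one.1 hr1) hk.ne'

lemma log_three_div_four_gt : -3 / 10 < log (3 / 4) := by
  rw [log_div (by norm_num) (by norm_num), show (4 : ℝ) = 2 ^ 2 by norm_num, log_pow]
  push_cast
  linarith [log_three_gt_d9, log_two_lt_d9]

lemma eq_sqrt_of_sq_eq {x y : ℝ} (hx : 0 ≤ x) (h : x ^ 2 = y) : x = √y := by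
  rw [← h, sqrt_sq hx]

theorem stmt_19 (k : ℝ) (h1 : 0 < k) (h2 : k ≤ 1) :
    ((2 * Real.sqrt 2 / 3) ^ k - (4/3) * ((4:ℝ)/5) ^ k + 1/3
        > (2/3) * (1 - ((4:ℝ)/5) ^ k) ∧
      (2/3) * (1 - ((4:ℝ)/5) ^ k)
        > (2 * Real.sqrt 6 / 5) ^ k - (4/9) * ((4:ℝ)/5) ^ k - 5/9 ∧
      (2 * Real.sqrt 6 / 5) ^ k - (4/9) * ((4:ℝ)/5) ^ k - 5/9
        > (2 * Real.sqrt 2 / 3) ^ k - (1/3) * ((4:ℝ)/5) ^ k - 2/3 ∧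
      (2 * Real.sqrt 2 / 3) ^ k - (1/3) * ((4:ℝ)/5) ^ k - 2/3 > 0) ∧
    ((Real.sqrt 3 / 2) ^ k - (10/9) * ((4:ℝ)/5) ^ k + 1/9
        > (2 * Real.sqrt 6 / 5) ^ k - (4/9) * ((4:ℝ)/5) ^ k - 5/9 ∧
      (2 * Real.sqrt 6 / 5) ^ k - (4/9) * ((4:ℝ)/5) ^ k - 5/9
        > (2/9) * (1 - ((4:ℝ)/5) ^ k) ∧
      (2/9) * (1 - ((4:ℝ)/5) ^ k)
        > (4 * Real.sqrt 3 / 7) ^ k - (1/9) * ((4:ℝ)/5) ^ k - 8/9 ∧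
      (4 * Real.sqrt 3 / 7) ^ k - (1/9) * ((4:ℝ)/5) ^ k - 8/9 > 0) := by
  rw [eq_sqrt_of_sq_eq (y := 8 / 9) (by positivity : 0 ≤ 2 * √2 / 3) (by norm_num [div_pow, mul_pow]),
    eq_sqrt_of_sq_eq (y := 24 / 25) (by positivity : 0 ≤ 2 * √6 / 5) (by norm_num [div_pow, mul_pow]),
    eq_sqrt_of_sq_eq (y := 3 / 4) (by positivity : 0 ≤ √3 / 2) (by norm_num [div_pow]),
    eq_sqrt_of_sq_eq (y := 48 / 49) (by positivity : 0 ≤ 4 * √3 / 7) (by norm_num [div_pow, mul_pow])]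
  have hx := rpow_le_one_add_mul_of_le (p := 4 / 5) (by norm_num) le_rfl h1.le h2
  have ha_ub := rpow_le_one_add_mul_of_le (p := √(8 / 9)) (M := 17 / 18) (sqrt_nonneg _)
    (sqrt_le_iff.2 ⟨by norm_num, by norm_num⟩) h1.le h2
  have hb_ub := rpow_le_one_add_mul_of_le (p := √(24 / 25)) (M := 49 / 50) (sqrt_nonneg _)
    (sqrt_le_iff.2 ⟨by norm_num, by norm_num⟩) h1.le h2
  have hd_ub := rpow_le_one_add_mul_of_le (p := √(48 / 49)) (M := 1) (sqrt_nonneg _)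
    (sqrt_le_iff.2 ⟨by norm_num, by norm_num⟩) h1.le h2
  have ha_lb := one_add_mul_div_two_lt_sqrt_rpow (r := 8 / 9) (by norm_num) (by norm_num) h1
    (one_sub_inv_le_log_of_pos (by norm_num))
  have hb_lb := one_add_mul_div_two_lt_sqrt_rpow (r := 24 / 25) (by norm_num) (by norm_num) h1
    (one_sub_inv_le_log_of_pos (by norm_num))
  have hc_lb := one_add_mul_div_two_lt_sqrt_rpow (r := 3 / 4) (by norm_num) (by norm_num) h1
    log_three_div_four_gt.le
  have hd_lb := one_add_mul_div_two_lt_sqrt_rpow (r := 48 / 49) (by norm_num) (by norm_num) h1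
    (one_sub_inv_le_log_of_pos (by norm_num))
  refine ⟨⟨?_, ?_, ?_, ?_⟩, ?_, ?_, ?_, ?_⟩ <;> linarith
end
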